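/- arXiv:1801.02213 — 7 statements merged into one kernel-verified Lean document; each statement's English description precedes it below -/
import Mathlib

section
/- For any odd prime p and any integer k with 0 ≤ k ≤ p-1, the harmonic numbers satisfy H_k ≡ H_{p-1-k} (mod p), where the congruence is between p-adic valuations of the rational numbers (i.e., the numerator of H_k - H_{p-1-k} is divisible by p). -/
open Finset in
lemma harm_add (a b : ℕ) :
    harmonic (a + b) = harmonic a + ∑ i ∈ range b, ((a + i + 1 : ℕ) : ℚ)⁻¹ := by
  induction b with
  | zero => simp
  | succ b ih =>
    rw [← Nat.add_assoc, harmonic_succ, ih, Finset.sum_range_succ]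
    push_cast
    ring

open Finset in
lemma harm_key (p k : ℕ) (hk : k ≤ p - 1) :
    (harmonic k - harmonic (p - 1 - k) : ℚ)
      = ∑ i ∈ range k, (((i + 1 : ℕ) : ℚ)⁻¹ + ((p - 1 - i : ℕ) : ℚ)⁻¹)
        - harmonic (p - 1) := by
  have h1 : harmonic (p - 1) = harmonic (p - 1 - k)
      + ∑ i ∈ range k, (((p - 1 - k) + i + 1 : ℕ) : ℚ)⁻¹ := by
    have := harm_add (p - 1 - k) k
    rwa [Nat.sub_add_cancel hk] at this
  have h2 : ∑ i ∈ range k, (((p - 1 - k) + i + 1 : ℕ) : ℚ)⁻¹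
      = ∑ i ∈ range k, ((p - 1 - i : ℕ) : ℚ)⁻¹ := by
    rw [← Finset.sum_range_reflect]
    apply Finset.sum_congr rfl
    intro i hi
    simp only [Finset.mem_range] at hi
    congr 2
    omega
  rw [harmonic, h1, h2, Finset.sum_add_distrib]
  push_cast
  ring

open Finset in
lemma harm_double (p : ℕ) (hp : 1 ≤ p) :
    (harmonic (p - 1) : ℚ)
      = 2⁻¹ * ∑ i ∈ range (p - 1), (((i + 1 : ℕ) : ℚ)⁻¹ + ((p - 1 - i : ℕ) : ℚ)⁻¹) := by
  have h2 : ∑ i ∈ range (p - 1), ((p - 1 - i : ℕ) : ℚ)⁻¹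
      = ∑ i ∈ range (p - 1), ((i + 1 : ℕ) : ℚ)⁻¹ := by
    rw [← Finset.sum_range_reflect]
    apply Finset.sum_congr rfl
    intro i hi
    simp only [Finset.mem_range] at hi
    congr 2
    omega
  rw [Finset.sum_add_distrib, h2, harmonic]
  ring

lemma norm_nat_unit (p : ℕ) [Fact p.Prime] (j : ℕ) (h1 : j ≠ 0) (h2 : j < p) :
    ‖(j : ℚ_[p])‖ = 1 := by
  rcases lt_or_eq_of_le (Padic.norm_int_le_one (p := p) j) with h | h
  · rw [Padic.norm_intCast_lt_one_iff] at h
    exact absurd (Int.ofNat_dvd.mp h) (Nat.not_dvd_of_pos_of_lt (Nat.pos_of_ne_zero h1) h2)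
  · exact_mod_cast h

open Finset in
lemma norm_S_le (p : ℕ) [Fact p.Prime] (m : ℕ) (hm : m ≤ p - 1) :
    ‖((∑ i ∈ range m, (((i + 1 : ℕ) : ℚ)⁻¹ + ((p - 1 - i : ℕ) : ℚ)⁻¹) : ℚ) : ℚ_[p])‖
      ≤ (p : ℝ)⁻¹ := by
  have hp2 : 2 ≤ p := (Fact.out : p.Prime).two_le
  push_cast
  apply IsUltrametricDist.norm_sum_le_of_forall_le_of_nonneg (by positivity)
  intro i hi
  simp only [Finset.mem_range] at hi
  have hip : i + 1 < p := by omega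
  have hipn : ((i + 1 : ℕ) : ℚ_[p]) ≠ 0 := by
    intro h
    have := norm_nat_unit p (i + 1) (by omega) hip
    rw [h] at this; simp at this
  have hqp : p - 1 - i ≠ 0 ∧ p - 1 - i < p := by omega
  have hqpn : ((p - 1 - i : ℕ) : ℚ_[p]) ≠ 0 := by
    intro h
    have := norm_nat_unit p (p - 1 - i) hqp.1 hqp.2
    rw [h] at this; simp at this
  have key : ((i + 1 : ℕ) : ℚ_[p])⁻¹ + ((p - 1 - i : ℕ) : ℚ_[p])⁻¹
      = (p : ℚ_[p]) * (((i + 1 : ℕ) : ℚ_[p]) * ((p - 1 - i : ℕ) : ℚ_[p]))⁻¹ := by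
    have hsum : ((i + 1 : ℕ) : ℚ_[p]) + ((p - 1 - i : ℕ) : ℚ_[p]) = (p : ℚ_[p]) := by
      rw [← Nat.cast_add]
      congr 1
      omega
    rw [inv_add_inv hipn hqpn, hsum, div_eq_mul_inv]
  push_cast at key ⊢
  rw [key, norm_mul, norm_inv, norm_mul]
  rw [show ‖((i:ℚ_[p]) + 1)‖ = ‖((i+1 : ℕ) : ℚ_[p])‖ by push_cast; ring_nf]
  rw [norm_nat_unit p (i+1) (by omega) hip, Padic.norm_p]
  rw [norm_nat_unit p (p-1-i) hqp.1 hqp.2]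
  simp

theorem harmonic_symmetry_mod_p (p : ℕ) [Fact p.Prime] (hp : Odd p) (k : ℕ)
    (hk : k ≤ p - 1) :
    ‖((harmonic k - harmonic (p - 1 - k) : ℚ) : ℚ_[p])‖ ≤ (p : ℝ)⁻¹ := by
  have hp2 : 2 ≤ p := (Fact.out : p.Prime).two_le
  have hp3 : 3 ≤ p := by
    rcases hp with ⟨m, hm⟩
    omega
  set S : ℕ → ℚ := fun m =>
    ∑ i ∈ Finset.range m, (((i + 1 : ℕ) : ℚ)⁻¹ + ((p - 1 - i : ℕ) : ℚ)⁻¹) with hS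
  have hkey : (harmonic k - harmonic (p - 1 - k) : ℚ) = S k - 2⁻¹ * S (p - 1) := by
    rw [harm_key p k hk, harm_double p (by omega)]
  rw [hkey]
  have hcast : ((S k - 2⁻¹ * S (p - 1) : ℚ) : ℚ_[p])
      = ((S k : ℚ) : ℚ_[p]) - (2 : ℚ_[p])⁻¹ * ((S (p - 1) : ℚ) : ℚ_[p]) := by
    push_cast
    ring
  rw [hcast, sub_eq_add_neg]
  refine le_trans (Padic.nonarchimedean _ _) (max_le (norm_S_le p k hk) ?_)
  rw [norm_neg, norm_mul, norm_inv]
  have h2 : ‖(2 : ℚ_[p])‖ = 1 := by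
    have := norm_nat_unit p 2 (by omega) (by omega)
    simpa using this
  rw [h2, inv_one, one_mul]
  exact norm_S_le p (p - 1) le_rfl
end

section
/- Let p be an odd prime, a an integer with 0 ≤ a < p/2, and r ≥ 0 an integer. Then ∑_{k=0}^{p-2a} ((2a)_k / k!)^{2r+1} * H_k ≡ -∑_{k=0}^{p-2a} ((2a)_k / k!)^{2r+1} * H_{2a+k-1} (mod p), where the congruence means the difference of the two rational numbers has p-adic valuation at least 1. -/
/-!
Write `n = p - 2a`. Since `(2a)_k / k! = C(2a+k-1, k)` and `2a ≡ -n (mod p)`, for `k ≤ n < p` one has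
`C(2a+k-1, k) ≡ (-1)^k C(n, k)`; together with `H_{p-1-j} ≡ H_j`, which holds because
`H_{p-1-j} - H_j` does not change under `j ↦ j + 1` and vanishes at the midpoint `j = (p-1)/2`,
the `k`-th summand of the combined sum is congruent to `((-1)^k C(n, k))^(2r+1) (H_k + H_{n-k})`.
As `n` is odd, the involution `k ↦ n - k` negates these summands, so the sum is `0` mod `p`.
All this is computed in `ℤ_[p]` and reduced to `ZMod p` by `PadicInt.toZMod`.
For `a = 0` every summand vanishes.
-/

open Finset PadicInt

namespace PadicInt

variable {p : ℕ} [Fact p.Prime]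

theorem coe_inv_of_norm_eq_one {z : ℤ_[p]} (hz : ‖z‖ = 1) : (z.inv : ℚ_[p]) = (z : ℚ_[p])⁻¹ :=
  eq_inv_of_mul_eq_one_right (by rw [← coe_mul, mul_inv hz, coe_one])

theorem toZMod_inv_of_norm_eq_one {z : ℤ_[p]} (hz : ‖z‖ = 1) : toZMod z.inv = (toZMod z)⁻¹ :=
  eq_inv_of_mul_eq_one_right (by rw [← map_mul, mul_inv hz, map_one])

theorem norm_natCast_eq_one_of_lt {n : ℕ} (hn0 : n ≠ 0) (hn : n < p) : ‖(n : ℤ_[p])‖ = 1 :=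
  norm_natCast_eq_one_iff.2 (Nat.coprime_of_lt_prime hn0 hn Fact.out)

theorem norm_coe_le_inv_of_toZMod_eq_zero {x : ℤ_[p]} (hx : toZMod x = 0) :
    ‖(x : ℚ_[p])‖ ≤ (p : ℝ)⁻¹ := by
  have hlt : ‖x‖ < 1 := mem_nonunits.1 (by rwa [← RingHom.mem_ker, ker_toZMod] at hx)
  simpa using (norm_le_pow_iff_norm_lt_pow_add_one x (-1)).2 (by simpa using hlt)

end PadicInt

theorem ascPochhammer_eval_div_factorial {K : Type*} [Field K] [CharZero K] (x k : ℕ) :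
    (ascPochhammer K k).eval (x : K) / k.factorial = ((x + k - 1).choose k : ℕ) := by
  rw [← Nat.cast_ascFactorial, Nat.ascFactorial_eq_factorial_mul_choose', Nat.cast_mul,
    mul_div_cancel_left₀ _ (by exact_mod_cast k.factorial_ne_zero)]

theorem neg_one_pow_sub_of_odd {R : Type*} [Monoid R] [HasDistribNeg R] {n k : ℕ} (hn : Odd n)
    (hk : k ≤ n) : (-1 : R) ^ (n - k) = -(-1) ^ k :=
  calc (-1 : R) ^ (n - k) = (-1) ^ (n - k) * ((-1) ^ k * (-1) ^ k) := by
        rw [← pow_add, Even.neg_one_pow ⟨k, rfl⟩, mul_one]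
    _ = (-1) ^ n * (-1) ^ k := by rw [← mul_assoc, ← pow_add, Nat.sub_add_cancel hk]
    _ = -(-1) ^ k := by rw [hn.neg_one_pow, neg_one_mul]

namespace ZMod

theorem natCast_eq_neg_of_add_eq {p x y : ℕ} (h : x + y = p) : (x : ZMod p) = -y := by
  rw [eq_neg_iff_add_eq_zero, ← Nat.cast_add, h, natCast_self]

variable {p : ℕ} [Fact p.Prime]

theorem natCast_choose_add_sub_one {x n k : ℕ} (hxn : x + n = p) (hk : k < p) :
    (((x + k - 1).choose k : ℕ) : ZMod p) = (-1) ^ k * n.choose k := by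
  have hfac : (k.factorial : ZMod p) ≠ 0 := by
    rw [Ne, natCast_eq_zero_iff, Nat.Prime.dvd_factorial Fact.out]
    omega
  apply mul_left_cancel₀ hfac
  rw [← Nat.cast_mul, ← Nat.ascFactorial_eq_factorial_mul_choose', Nat.cast_ascFactorial,
    natCast_eq_neg_of_add_eq hxn, ascPochhammer_eval_neg_eq_descPochhammer,
    descPochhammer_eval_eq_descFactorial, Nat.descFactorial_eq_factorial_mul_choose, Nat.cast_mul]
  ring

end ZMod

def zmodHarmonic (p n : ℕ) : ZMod p := ∑ i ∈ range n, ((i + 1 : ℕ) : ZMod p)⁻¹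

noncomputable def padicHarmonic (p : ℕ) [Fact p.Prime] (n : ℕ) : ℤ_[p] :=
  ∑ i ∈ range n, PadicInt.inv ((i + 1 : ℕ) : ℤ_[p])

section Harmonic

variable {p : ℕ} [Fact p.Prime]

theorem zmodHarmonic_sub_one_sub (hp : Odd p) {j : ℕ} (hj : j < p) :
    zmodHarmonic p (p - 1 - j) = zmodHarmonic p j := by
  set d : ℕ → ZMod p := fun i => zmodHarmonic p (p - 1 - i) - zmodHarmonic p i with hd
  have step (i : ℕ) (hi : i + 1 < p) : d (i + 1) = d i := by
    have hsucc : p - 1 - i = p - 1 - (i + 1) + 1 := by omega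
    have hneg : ((p - 1 - (i + 1) + 1 : ℕ) : ZMod p) = -((i + 1 : ℕ) : ZMod p) :=
      ZMod.natCast_eq_neg_of_add_eq (by omega)
    simp only [hd, zmodHarmonic]
    rw [hsucc, sum_range_succ _ (p - 1 - (i + 1)), sum_range_succ _ i, hneg, inv_neg]
    ring
  have hconst : ∀ i < p, d i = d 0 := by
    intro i hi
    induction i with
    | zero => rfl
    | succ i ih => rw [step i hi, ih (by omega)]
  obtain ⟨m, hm⟩ := hp
  have hmid : d m = 0 := by
    simp only [hd, show p - 1 - m = m by omega, sub_self]
  rw [← sub_eq_zero]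
  change d j = 0
  rw [hconst j hj, ← hconst m (by omega), hmid]

theorem coe_padicHarmonic {n : ℕ} (hn : n < p) : (padicHarmonic p n : ℚ_[p]) = harmonic n := by
  rw [padicHarmonic, harmonic, PadicInt.coe_sum, Rat.cast_sum]
  refine sum_congr rfl fun i hi => ?_
  rw [coe_inv_of_norm_eq_one (norm_natCast_eq_one_of_lt i.succ_ne_zero (by simp at hi; omega))]
  push_cast
  rfl

theorem toZMod_padicHarmonic {n : ℕ} (hn : n < p) :
    toZMod (padicHarmonic p n) = zmodHarmonic p n := by
  rw [padicHarmonic, zmodHarmonic, map_sum]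
  refine sum_congr rfl fun i hi => ?_
  rw [toZMod_inv_of_norm_eq_one (norm_natCast_eq_one_of_lt i.succ_ne_zero (by simp at hi; omega)),
    map_natCast]

end Harmonic

theorem sum_choose_pow_mul_zmodHarmonic_eq_zero {p : ℕ} [Fact p.Prime] (hp : Odd p) {a : ℕ}
    (ha0 : 0 < a) (ha : 2 * a < p) {m : ℕ} (hm : Odd m) :
    ∑ k ∈ range (p - 2 * a + 1), (((2 * a + k - 1).choose k : ℕ) : ZMod p) ^ m
      * (zmodHarmonic p k + zmodHarmonic p (2 * a + k - 1)) = 0 := by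
  obtain ⟨n, hnp⟩ : ∃ n, 2 * a + n = p := ⟨p - 2 * a, by omega⟩
  rw [show p - 2 * a = n by omega]
  have hn : Odd n := by
    obtain ⟨t, ht⟩ := hp
    exact ⟨t - a, by omega⟩
  set f : ℕ → ZMod p := fun k =>
    ((-1) ^ k * n.choose k) ^ m * (zmodHarmonic p k + zmodHarmonic p (n - k))
  have hterm : ∀ k ∈ range (n + 1), (((2 * a + k - 1).choose k : ℕ) : ZMod p) ^ m
      * (zmodHarmonic p k + zmodHarmonic p (2 * a + k - 1)) = f k := by
    intro k hk
    rw [mem_range] at hk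
    rw [ZMod.natCast_choose_add_sub_one hnp (by omega),
      show 2 * a + k - 1 = p - 1 - (n - k) by omega, zmodHarmonic_sub_one_sub hp (by omega)]
  rw [sum_congr rfl hterm]
  refine sum_involution (fun k _ => n - k) (fun k hk => ?_) (fun k _ _ => ?_)
    (fun k _ => ?_) (fun k hk => ?_)
  · have hkn : k ≤ n := Nat.le_of_lt_succ (mem_range.1 hk)
    simp only [Nat.choose_symm hkn, Nat.sub_sub_self hkn, neg_one_pow_sub_of_odd hn hkn,
      neg_mul, hm.neg_pow]
    ring
  · obtain ⟨t, ht⟩ := hn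
    omega
  · simp only [mem_range]
    omega
  · simp only [mem_range] at hk
    omega

theorem norm_sum_choose_pow_mul_harmonic_le {p : ℕ} [Fact p.Prime] (hp : Odd p) {a : ℕ}
    (ha0 : 0 < a) (ha : 2 * a < p) {m : ℕ} (hm : Odd m) :
    ‖((∑ k ∈ range (p - 2 * a + 1), ((2 * a + k - 1).choose k : ℚ) ^ m
        * (harmonic k + harmonic (2 * a + k - 1)) : ℚ) : ℚ_[p])‖ ≤ (p : ℝ)⁻¹ := by
  have hlift : ∀ k ∈ range (p - 2 * a + 1),
      ((((2 * a + k - 1).choose k : ℚ) ^ m * (harmonic k + harmonic (2 * a + k - 1)) : ℚ) : ℚ_[p])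
      = ((((2 * a + k - 1).choose k : ℤ_[p]) ^ m
        * (padicHarmonic p k + padicHarmonic p (2 * a + k - 1)) : ℤ_[p]) : ℚ_[p]) := by
    intro k hk
    rw [mem_range] at hk
    push_cast
    rw [coe_padicHarmonic (by omega), coe_padicHarmonic (by omega)]
  rw [Rat.cast_sum, sum_congr rfl hlift, ← PadicInt.coe_sum]
  apply norm_coe_le_inv_of_toZMod_eq_zero
  rw [map_sum, ← sum_choose_pow_mul_zmodHarmonic_eq_zero hp ha0 ha hm]
  refine sum_congr rfl fun k hk => ?_
  rw [mem_range] at hk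
  rw [map_mul, map_pow, map_add, map_natCast, toZMod_padicHarmonic (by omega),
    toZMod_padicHarmonic (by omega)]

theorem pochhammer_harmonic_sum_congr (p : ℕ) [Fact p.Prime] (hp : Odd p)
    (a : ℕ) (ha : 2 * a < p) (r : ℕ) :
    ‖((∑ k ∈ Finset.range (p - 2 * a + 1),
          ((ascPochhammer ℚ k).eval (2 * a : ℚ) / k.factorial) ^ (2 * r + 1) * harmonic k
        + ∑ k ∈ Finset.range (p - 2 * a + 1),
          ((ascPochhammer ℚ k).eval (2 * a : ℚ) / k.factorial) ^ (2 * r + 1)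
            * harmonic (2 * a + k - 1) : ℚ) : ℚ_[p])‖ ≤ (p : ℝ)⁻¹ := by
  have hbinom (k : ℕ) : (ascPochhammer ℚ k).eval (2 * a : ℚ) / k.factorial
      = ((2 * a + k - 1).choose k : ℕ) := by
    exact_mod_cast ascPochhammer_eval_div_factorial (2 * a) k
  simp only [hbinom, ← sum_add_distrib, ← mul_add]
  rcases Nat.eq_zero_or_pos a with rfl | ha0
  · rw [sum_eq_zero fun k _ => ?_, Rat.cast_zero, norm_zero]
    · positivity
    rcases k with _ | k
    · simp [harmonic]
    · simp
  exact norm_sum_choose_pow_mul_harmonic_le hp ha0 ha (odd_two_mul_add_one r)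
end

section
/- Let p be an odd prime and k an integer with (p+1)/2 ≤ k ≤ p-2. Then the Catalan number C_k is divisible by p. -/
theorem prime_dvd_catalan (p : ℕ) [Fact p.Prime] (hp : Odd p) (k : ℕ)
    (hk1 : (p + 1) / 2 ≤ k) (hk2 : k ≤ p - 2) :
    p ∣ catalan k := by
  have hpp : p.Prime := Fact.out
  have hp2 : 2 ≤ p := hpp.two_le
  have hkp : k < p := lt_of_le_of_lt hk2 (by omega)
  have h2k : p ≤ 2 * k := by
    obtain ⟨m, rfl⟩ := hp
    omega
  have hdvd : p ∣ Nat.centralBinom k := by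
    unfold Nat.centralBinom
    exact hpp.dvd_choose hkp (by omega) h2k
  rw [← succ_mul_catalan_eq_centralBinom] at hdvd
  rcases (Nat.Prime.dvd_mul hpp).mp hdvd with h | h
  · exact absurd (Nat.le_of_dvd (by omega) h) (by omega)
  · exact h
end

section
/- For any positive integer m and integer k ≥ 0, the derivative of x ↦ (m - x)_k at x = 0 equals (m)_k * (H_{m-1} - H_{m+k-1}). -/
theorem deriv_pochhammer_at_zero (m : ℕ) (hm : 1 ≤ m) (k : ℕ) :
    (Polynomial.derivative
        ((ascPochhammer ℚ k).comp (Polynomial.C (m : ℚ) - Polynomial.X))).eval 0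
      = (ascPochhammer ℚ k).eval (m : ℚ) * (harmonic (m - 1) - harmonic (m + k - 1)) := by
  obtain ⟨n, rfl⟩ : ∃ n, m = n + 1 := ⟨m - 1, (Nat.succ_pred_eq_of_pos hm).symm⟩
  induction k with
  | zero => simp
  | succ k ih =>
    have h1 : n + 1 + (k + 1) - 1 = (n + 1 + k - 1) + 1 := by omega
    rw [ascPochhammer_succ_right, Polynomial.mul_comp, Polynomial.derivative_mul,
      Polynomial.eval_add, Polynomial.eval_mul, Polynomial.eval_mul, ih, h1, harmonic_succ]

    simp only [Polynomial.eval_comp, Polynomial.add_comp, Polynomial.X_comp,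
      Polynomial.natCast_comp, Polynomial.derivative_add, Polynomial.derivative_sub,
      Polynomial.derivative_X, Polynomial.derivative_C, Polynomial.derivative_natCast,
      Polynomial.eval_sub, Polynomial.eval_C, Polynomial.eval_X, Polynomial.eval_natCast,
      Polynomial.eval_neg, Polynomial.eval_add, sub_zero, zero_sub, Polynomial.eval_zero,
      Polynomial.eval_mul, Polynomial.eval_one, add_zero]
    have h2 : ((n + 1 + k - 1 + 1 : ℕ) : ℚ) = (n : ℚ) + 1 + k := by
      push_cast [show n + 1 + k - 1 + 1 = n + k + 1 from by omega]; ring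
    have hne : (n : ℚ) + 1 + k ≠ 0 := by positivity
    rw [h2]
    push_cast
    field_simp
    ring
end

section
/- Let p be an odd prime and a an integer with 1 ≤ a ≤ (p-1)/2. Then (2a-2p)_p * ((2a)_p)^{2r} / ((1)_p)^{2r+1} ≡ -1 (mod p) for any integer r ≥ 0, where the left side is a p-adic integer (after cancellation). -/
/-!
At a natural number, the rising factorial is a factorial times a binomial coefficient:
`(2a)_p = p! · C(p + 2a - 1, p)` and `(2a - 2p)_p = (-1)^p · p! · C(p + (p - 2a), p)`.
So for odd `p` the quantity is `-C(p + (p - 2a), p) · C(p + 2a - 1, p)^(2r)`, an integer, and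
by Lucas' theorem `C(p + m, p) ≡ C(m, 0) · C(1, 1) = 1 (mod p)` for `m < p`.
-/

open Polynomial Nat

lemma ascPochhammer_eval_natCast_add_one {S : Type*} [Semiring S] (n k : ℕ) :
    (ascPochhammer S k).eval ((n : S) + 1) = (k ! * (n + k).choose k : ℕ) := by
  rw [← Nat.cast_succ, ascPochhammer_nat_eq_natCast_ascFactorial,
    Nat.ascFactorial_eq_factorial_mul_choose]

lemma ascPochhammer_eval_neg_natCast {R : Type*} [Ring R] (n k : ℕ) :
    (ascPochhammer R k).eval (-(n : R)) = (-1) ^ k * (k ! * n.choose k : ℕ) := by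
  rw [ascPochhammer_eval_neg_eq_descPochhammer, descPochhammer_eval_eq_descFactorial,
    Nat.descFactorial_eq_factorial_mul_choose]

lemma natCast_prime_add_choose_prime {p m : ℕ} [Fact p.Prime] (hm : m < p) :
    ((p + m).choose p : ZMod p) = 1 := by
  have hp : 0 < p := (Fact.out : p.Prime).pos
  have lucas := (ZMod.natCast_eq_natCast_iff _ _ _).mpr
    (Choose.choose_modEq_choose_mod_mul_choose_div_nat (n := p + m) (k := p) (p := p))
  rwa [Nat.add_mod_left, Nat.mod_eq_of_lt hm, Nat.add_div_left _ hp, Nat.div_eq_of_lt hm,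
    Nat.mod_self, Nat.div_self hp, Nat.choose_zero_right, Nat.choose_self, Nat.cast_one] at lucas

lemma Padic.norm_intCast_le_inv_iff {p : ℕ} [Fact p.Prime] (z : ℤ) :
    ‖(z : ℚ_[p])‖ ≤ (p : ℝ)⁻¹ ↔ (z : ZMod p) = 0 := by
  simpa [ZMod.intCast_zmod_eq_zero_iff_dvd] using Padic.norm_int_le_pow_iff_dvd (p := p) z 1

theorem pochhammer_p_ratio_congr (p : ℕ) [Fact p.Prime] (hp : Odd p)
    (a : ℕ) (ha1 : 1 ≤ a) (ha2 : 2 * a ≤ p - 1) (r : ℕ) :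
    ‖(((ascPochhammer ℚ p).eval (2 * a - 2 * p : ℚ)
          * ((ascPochhammer ℚ p).eval (2 * a : ℚ)) ^ (2 * r)
          / (p.factorial : ℚ) ^ (2 * r + 1) + 1 : ℚ) : ℚ_[p])‖ ≤ (p : ℝ)⁻¹ := by
  set A := (p + (p - 2 * a)).choose p
  set B := (p + (2 * a - 1)).choose p
  have hA : (ascPochhammer ℚ p).eval (2 * a - 2 * p : ℚ) = -(p ! * A : ℕ) := by
    have : (2 * a - 2 * p : ℚ) = -((p + (p - 2 * a) : ℕ) : ℚ) := by
      push_cast [Nat.cast_sub (by omega : 2 * a ≤ p)]; ring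
    rw [this, ascPochhammer_eval_neg_natCast, hp.neg_one_pow, neg_one_mul]
  have hB : (ascPochhammer ℚ p).eval (2 * a : ℚ) = (p ! * B : ℕ) := by
    have : (2 * a : ℚ) = ((2 * a - 1 : ℕ) : ℚ) + 1 := by
      push_cast [Nat.cast_sub (by omega : 1 ≤ 2 * a)]; ring
    rw [this, ascPochhammer_eval_natCast_add_one, add_comm (2 * a - 1)]
  have hint : (ascPochhammer ℚ p).eval (2 * a - 2 * p : ℚ)
        * ((ascPochhammer ℚ p).eval (2 * a : ℚ)) ^ (2 * r)
        / (p ! : ℚ) ^ (2 * r + 1) + 1 = ((1 - A * B ^ (2 * r) : ℤ) : ℚ) := by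
    rw [hA, hB]
    field_simp [p.factorial_ne_zero]
    push_cast
    ring
  rw [hint, Rat.cast_intCast, Padic.norm_intCast_le_inv_iff]
  push_cast
  rw [natCast_prime_add_choose_prime (by omega), natCast_prime_add_choose_prime (by omega)]
  simp
end

section
/- Let p be an odd prime, a an integer with 1 ≤ a ≤ (p-1)/2, r ≥ 0 an integer, and let s₀,…,s_r, t₁,…,t_r be integers. Then ∑_{k=0}^{p-1} (2a - s₀p)_k (2a - s₁p)_k ⋯ (2a - s_rp)_k / ((1+t₁p)_k ⋯ (1+t_rp)_k * k!) ≡ ∑_{k=0}^{p-1} ((2a - p)_k)^{r+1} / (k!)^{r+1} (mod p), and in particular when r is replaced by 2r the sum is ≡ 0 (mod p). -/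
/-!
For `k < p` every summand is a quotient of integers whose denominator is prime to `p`,
because `(1 + t p)_k ≡ (1)_k = k! (mod p)`; modulo `p` the shifts `s i * p` and `t j * p`
disappear, so the two sums agree term by term. For the second claim put `m = p - 2a`, which is
odd: then `(2a - p)_k / k! = (-1)^k C(m, k)`, and with an odd exponent the right-hand sum becomes
`∑ (-1)^k C(m, k)^(2r+1)`, which vanishes under `k ↦ m - k`.
-/

open Polynomial Finset Nat

theorem ascPochhammer_eval_intCast {R : Type*} [Ring R] (k : ℕ) (x : ℤ) :
    (ascPochhammer R k).eval (x : R) = (((ascPochhammer ℤ k).eval x : ℤ) : R) := by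
  rw [ascPochhammer_eval₂ (Int.castRingHom R)]
  exact eval₂_at_apply (Int.castRingHom R) x

theorem ascPochhammer_eval_neg_natCast_div_factorial {K : Type*} [Field K] [CharZero K]
    (m k : ℕ) : (ascPochhammer K k).eval (-(m : K)) / k ! = (-1) ^ k * m.choose k := by
  rw [ascPochhammer_eval_neg_eq_descPochhammer, descPochhammer_eval_eq_descFactorial,
    descFactorial_eq_factorial_mul_choose, cast_mul, mul_left_comm,
    mul_div_cancel_left₀ _ (cast_ne_zero.mpr (factorial_ne_zero k))]

theorem sum_range_neg_one_pow_mul_choose_pow_of_odd {m : ℕ} (hm : Odd m) (e : ℕ) :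
    ∑ k ∈ range (m + 1), (-1 : ℤ) ^ k * (m.choose k) ^ e = 0 := by
  have hS : ∑ k ∈ range (m + 1), (-1 : ℤ) ^ k * (m.choose k) ^ e
      = -∑ k ∈ range (m + 1), (-1 : ℤ) ^ k * (m.choose k) ^ e := by
    conv_lhs => rw [← sum_range_reflect]
    rw [← sum_neg_distrib]
    refine sum_congr rfl fun k hk => ?_
    obtain ⟨j, rfl⟩ := Nat.exists_eq_add_of_le (show k ≤ m by rw [mem_range] at hk; omega)
    rw [add_tsub_cancel_right, add_tsub_cancel_left, choose_symm_add]
    rcases Nat.even_or_odd k with hk | hk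
    · have hj : Odd j := by simpa [Nat.not_odd_iff_even.mpr hk] using Nat.odd_add.mp hm
      simp [hk.neg_one_pow, hj.neg_one_pow]
    · have hj : Even j := (Nat.odd_add.mp hm).mp hk
      simp [hk.neg_one_pow, hj.neg_one_pow]
  omega

theorem sum_range_ascPochhammer_eval_neg_pow_div_factorial_pow {K : Type*} [Field K]
    [CharZero K] {m e N : ℕ} (hm : Odd m) (he : Odd e) (hN : m < N) :
    ∑ k ∈ range N, (ascPochhammer K k).eval (-(m : K)) ^ e / (k ! : K) ^ e = 0 := by
  have hterm : ∀ k, (ascPochhammer K k).eval (-(m : K)) ^ e / (k ! : K) ^ e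
      = (((-1) ^ k * m.choose k ^ e : ℤ) : K) := fun k => by
    rw [← div_pow, ascPochhammer_eval_neg_natCast_div_factorial, mul_pow, ← pow_mul,
      mul_comm k, pow_mul, he.neg_one_pow]
    push_cast; ring
  rw [sum_congr rfl fun k _ => hterm k, ← Int.cast_sum, ← sum_range_add_sum_Ico _ hN,
    sum_range_neg_one_pow_mul_choose_pow_of_odd hm, zero_add, Int.cast_eq_zero]
  refine sum_eq_zero fun k hk => ?_
  rw [choose_eq_zero_of_lt (mem_Ico.mp hk).1]
  simp [he.pos.ne']

namespace Padic

variable {p : ℕ} [Fact p.Prime]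

theorem norm_intCast_eq_one_of_zmod_ne_zero {z : ℤ} (hz : (z : ZMod p) ≠ 0) :
    ‖(z : ℚ_[p])‖ = 1 :=
  (norm_int_le_one z).antisymm <| not_lt.mp fun h =>
    hz ((ZMod.intCast_zmod_eq_zero_iff_dvd z p).mpr (norm_intCast_lt_one_iff.mp h))

theorem norm_intCast_le_inv_of_zmod_eq_zero {z : ℤ} (hz : (z : ZMod p) = 0) :
    ‖(z : ℚ_[p])‖ ≤ (p : ℝ)⁻¹ := by
  have hdvd : (p ^ 1 : ℤ) ∣ z := by rwa [pow_one, ← ZMod.intCast_zmod_eq_zero_iff_dvd]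
  simpa using (norm_int_le_pow_iff_dvd z 1).mpr hdvd

theorem norm_intCast_div_sub_intCast_div_le {A B C D : ℤ} (hB : (B : ZMod p) ≠ 0)
    (hD : (D : ZMod p) ≠ 0) (h : (A : ZMod p) * D = B * C) :
    ‖(A : ℚ_[p]) / B - C / D‖ ≤ (p : ℝ)⁻¹ := by
  have hB₁ := norm_intCast_eq_one_of_zmod_ne_zero hB
  have hD₁ := norm_intCast_eq_one_of_zmod_ne_zero hD
  rw [div_sub_div _ _ (norm_ne_zero_iff.mp (hB₁ ▸ one_ne_zero))
      (norm_ne_zero_iff.mp (hD₁ ▸ one_ne_zero)),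
    norm_div, norm_mul, hB₁, hD₁, mul_one, div_one]
  exact_mod_cast norm_intCast_le_inv_of_zmod_eq_zero (p := p) (z := A * D - B * C)
    (by push_cast; rw [h, sub_self])

theorem norm_prod_ascPochhammer_div_sub_le {ι κ : Type*} [Fintype ι] [Fintype κ]
    (hcard : Fintype.card ι = Fintype.card κ + 1) {k : ℕ} (hk : k < p)
    (x : ι → ℤ) (y : κ → ℤ) (x₀ : ℤ) (hx : ∀ i, (x i : ZMod p) = x₀)
    (hy : ∀ j, (y j : ZMod p) = 1) :
    ‖(∏ i, (ascPochhammer ℚ_[p] k).eval (x i : ℚ_[p]))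
          / ((∏ j, (ascPochhammer ℚ_[p] k).eval (y j : ℚ_[p])) * k !)
        - (ascPochhammer ℚ_[p] k).eval (x₀ : ℚ_[p]) ^ Fintype.card ι
          / (k ! : ℚ_[p]) ^ Fintype.card ι‖ ≤ (p : ℝ)⁻¹ := by
  have hfac : (k ! : ZMod p) ≠ 0 := by
    rw [ne_eq, ZMod.natCast_eq_zero_iff, (Fact.out : p.Prime).dvd_factorial]
    omega
  simp only [ascPochhammer_eval_intCast, ← Int.cast_prod, ← Int.cast_pow,
    ← Int.cast_natCast (R := ℚ_[p]) (k !), ← Int.cast_mul]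
  apply norm_intCast_div_sub_intCast_div_le <;>
    simp only [Int.cast_mul, Int.cast_prod, Int.cast_pow, ← ascPochhammer_eval_intCast, hx, hy,
      ascPochhammer_eval_one, prod_const, Finset.card_univ, hcard, Int.cast_natCast]
  · exact mul_ne_zero (pow_ne_zero _ hfac) hfac
  · exact pow_ne_zero _ hfac
  · ring

end Padic

theorem shifted_parameters_congr (p : ℕ) [Fact p.Prime] (hp : Odd p)
    (a : ℕ) (ha1 : 1 ≤ a) (ha2 : 2 * a ≤ p - 1) (r : ℕ)
    (s : Fin (r + 1) → ℤ) (t : Fin r → ℤ) :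
    ‖(∑ k ∈ Finset.range p,
          (∏ i, (ascPochhammer ℚ_[p] k).eval ((2 * a : ℚ_[p]) - s i * p))
            / ((∏ j, (ascPochhammer ℚ_[p] k).eval ((1 : ℚ_[p]) + t j * p))
                * (k.factorial : ℚ_[p])))
        - ∑ k ∈ Finset.range p,
          ((ascPochhammer ℚ_[p] k).eval ((2 * a : ℚ_[p]) - p)) ^ (r + 1)
            / (k.factorial : ℚ_[p]) ^ (r + 1)‖ ≤ (p : ℝ)⁻¹
    ∧ (Even r →
        ‖∑ k ∈ Finset.range p,
            (∏ i, (ascPochhammer ℚ_[p] k).eval ((2 * a : ℚ_[p]) - s i * p))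
              / ((∏ j, (ascPochhammer ℚ_[p] k).eval ((1 : ℚ_[p]) + t j * p))
                  * (k.factorial : ℚ_[p]))‖ ≤ (p : ℝ)⁻¹) := by
  refine (fun hcongr => ⟨hcongr, fun hr => ?_⟩) ?_
  · rw [← sum_sub_distrib]
    refine IsUltrametricDist.norm_sum_le_of_forall_le_of_nonneg (by positivity) fun k hk => ?_
    have := Padic.norm_prod_ascPochhammer_div_sub_le (by simp) (mem_range.mp hk)
      (fun i => 2 * a - s i * p) (fun j => 1 + t j * p) (2 * a - p) (by simp) (by simp)
    push_cast at this
    simpa using this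
  have hneg : (2 * a : ℚ_[p]) - p = -((p - 2 * a : ℕ) : ℚ_[p]) := by
    push_cast [Nat.cast_sub (by omega : 2 * a ≤ p)]
    ring
  have hzero := sum_range_ascPochhammer_eval_neg_pow_div_factorial_pow (K := ℚ_[p])
    (Nat.Odd.sub_even (by omega) hp (even_two_mul a)) (Even.add_one hr)
    (by omega : p - 2 * a < p)
  rw [← hneg] at hzero
  rwa [hzero, sub_zero] at hcongr
end

section
/- Let p be an odd prime and m a positive integer with m ≤ p - 1. Then for every p-adic integer t, (m - tp)_k - (m)_k ≡ tp * (m)_k * (H_{m-1} - H_{m+k-1}) (mod p²) in ℤ_p, for all 0 ≤ k ≤ p - m. -/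
/-!
The Pochhammer polynomial `(X)_k` has coefficients in `ℤ_p`, so Taylor's formula at `m` with
increment `y = -tp` reads `(m + y)_k = (m)_k + y (X)_k'(m) + c y²` with `c ∈ ℤ_p`, and `‖y²‖ ≤ p⁻²`.
The logarithmic derivative of `(X)_k = ∏_{i<k} (X + i)` at `m ≥ 1` is
`∑_{i<k} 1/(m + i) = H_{m+k-1} - H_{m-1}`, which turns the linear term into the harmonic one.
-/

open Polynomial Finset

theorem eval_derivative_ascPochhammer {K : Type*} [Field K] (n : ℕ) (x : K)
    (hx : ∀ i < n, x + i ≠ 0) :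
    (derivative (ascPochhammer K n)).eval x
      = (ascPochhammer K n).eval x * ∑ i ∈ range n, (x + i)⁻¹ := by
  induction n with
  | zero => simp
  | succ n ih =>
    have hxn : x + n ≠ 0 := hx n n.lt_succ_self
    rw [ascPochhammer_succ_right, derivative_mul, sum_range_succ, eval_add, eval_mul, eval_mul,
      ih fun i hi => hx i (hi.trans n.lt_succ_self)]
    simp only [derivative_add, derivative_X, derivative_natCast, add_zero, eval_add, eval_mul,
      eval_X, eval_natCast, eval_one]
    field_simp

theorem harmonic_add_sub_harmonic (n k : ℕ) :
    harmonic (n + k) - harmonic n = ∑ i ∈ range k, ((n + 1 + i : ℕ) : ℚ)⁻¹ := by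
  simp only [harmonic, sum_range_add, add_sub_cancel_left, add_right_comm n]

theorem PadicInt.norm_eval_add_sub_sub_derivative_le {p : ℕ} [Fact p.Prime] (f : ℤ_[p][X])
    (x y : ℤ_[p]) :
    ‖f.eval (x + y) - f.eval x - (derivative f).eval x * y‖ ≤ ‖y‖ ^ 2 := by
  obtain ⟨c, hc⟩ := f.binomExpansion x y
  rw [show f.eval (x + y) - f.eval x - (derivative f).eval x * y = c * y ^ 2 by rw [hc]; ring,
    norm_mul, norm_pow]
  exact mul_le_of_le_one_left (by positivity) c.norm_le_one

theorem PadicInt.norm_eval_map_add_sub_sub_derivative_le {p : ℕ} [Fact p.Prime] (f : ℤ_[p][X])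
    (x y : ℤ_[p]) :
    ‖(f.map Coe.ringHom).eval ((x : ℚ_[p]) + y) - (f.map Coe.ringHom).eval (x : ℚ_[p])
      - (derivative (f.map Coe.ringHom)).eval (x : ℚ_[p]) * y‖ ≤ ‖y‖ ^ 2 := by
  have hcast (g : ℤ_[p][X]) (z : ℤ_[p]) :
      (g.map Coe.ringHom).eval (z : ℚ_[p]) = ((g.eval z : ℤ_[p]) : ℚ_[p]) :=
    eval_map_apply (p := g) Coe.ringHom z
  rw [derivative_map, ← coe_add, hcast, hcast, hcast, ← coe_mul, ← coe_sub, ← coe_sub,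
    padic_norm_e_of_padicInt]
  exact norm_eval_add_sub_sub_derivative_le f x y

theorem pochhammer_shift_expansion_general (p : ℕ) [Fact p.Prime]
    (m : ℕ) (hm1 : 1 ≤ m) (t : ℤ_[p]) (k : ℕ) :
    ‖(ascPochhammer ℚ_[p] k).eval ((m : ℚ_[p]) - t * p)
        - (ascPochhammer ℚ_[p] k).eval (m : ℚ_[p])
        - (t : ℚ_[p]) * p * (ascPochhammer ℚ_[p] k).eval (m : ℚ_[p])
            * ((harmonic (m - 1) - harmonic (m + k - 1) : ℚ) : ℚ_[p])‖
      ≤ (p : ℝ) ^ (-2 : ℤ) := by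
  obtain ⟨n, rfl⟩ := Nat.exists_eq_add_of_le' hm1
  have hderiv : (derivative (ascPochhammer ℚ_[p] k)).eval ((n + 1 : ℕ) : ℚ_[p])
      = (ascPochhammer ℚ_[p] k).eval ((n + 1 : ℕ) : ℚ_[p])
        * ((harmonic (n + 1 + k - 1) - harmonic (n + 1 - 1) : ℚ) : ℚ_[p]) := by
    rw [eval_derivative_ascPochhammer _ _ fun i _ => by norm_cast; omega,
      Nat.add_sub_cancel, add_right_comm, Nat.add_sub_cancel, harmonic_add_sub_harmonic]
    push_cast
    rfl
  have htaylor := PadicInt.norm_eval_map_add_sub_sub_derivative_le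
    (ascPochhammer ℤ_[p] k) (n + 1 : ℕ) (-(t * p))
  rw [ascPochhammer_map, PadicInt.coe_natCast, PadicInt.coe_neg, ← sub_eq_add_neg, hderiv,
    ← neg_sub (harmonic _)] at htaylor
  refine le_trans (le_of_eq ?_) (htaylor.trans ?_)
  · push_cast
    congr 1
    ring
  · calc ‖-(t * p)‖ ^ 2 = ‖t‖ ^ 2 * ‖(p : ℤ_[p]) ^ 2‖ := by
          rw [norm_neg, norm_mul, mul_pow, norm_pow]
      _ ≤ ‖(p : ℤ_[p]) ^ 2‖ :=
          mul_le_of_le_one_left (norm_nonneg _) (pow_le_one₀ (norm_nonneg t) t.norm_le_one)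
      _ = (p : ℝ) ^ (-2 : ℤ) := PadicInt.norm_p_pow 2

theorem pochhammer_shift_expansion (p : ℕ) [Fact p.Prime] (hp : Odd p)
    (m : ℕ) (hm1 : 1 ≤ m) (hm2 : m ≤ p - 1) (t : ℤ_[p]) (k : ℕ) (hk : k ≤ p - m) :
    ‖(ascPochhammer ℚ_[p] k).eval ((m : ℚ_[p]) - t * p)
        - (ascPochhammer ℚ_[p] k).eval (m : ℚ_[p])
        - (t : ℚ_[p]) * p * (ascPochhammer ℚ_[p] k).eval (m : ℚ_[p])
            * ((harmonic (m - 1) - harmonic (m + k - 1) : ℚ) : ℚ_[p])‖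
      ≤ (p : ℝ) ^ (-2 : ℤ) :=
  pochhammer_shift_expansion_general p m hm1 t k
end
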